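/- Let g, h be n-variable m-resilient Boolean functions and define G(X₁,…,X_{n+3}) = X_{n+3} ⊕ X_{n+2} ⊕ (1⊕X_{n+1})g(X₁,…,Xₙ) ⊕ X_{n+1}h(X₁,…,Xₙ). Then G is an (n+3)-variable (m+2)-resilient function. -/
import Mathlib


open Finset

abbrev BF (n : ℕ) := (Fin n → ZMod 2) → ZMod 2

def bfInner {n : ℕ} (a x : Fin n → ZMod 2) : ZMod 2 := ∑ i, a i * x i

def walsh {n : ℕ} (f : BF n) (a : Fin n → ZMod 2) : ℤ :=
  ∑ x : Fin n → ZMod 2, (-1 : ℤ) ^ ((f x + bfInner a x).val)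

def hdist {n : ℕ} (f g : BF n) : ℕ :=
  (Finset.univ.filter (fun x => f x ≠ g x)).card

def wt {n : ℕ} (a : Fin n → ZMod 2) : ℕ :=
  (Finset.univ.filter (fun i => a i ≠ 0)).card

def resilient {n : ℕ} (m : ℕ) (f : BF n) : Prop :=
  ∀ a, wt a ≤ m → walsh f a = 0

def balanced {n : ℕ} (f : BF n) : Prop :=
  (Finset.univ.filter (fun x => f x = 1)).card = 2 ^ (n - 1)

noncomputable def nl {n : ℕ} (f : BF n) : ℕ :=
  sInf {d | ∃ (a : Fin n → ZMod 2) (c : ZMod 2), d = hdist f (fun x => c + bfInner a x)}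

def anf {n : ℕ} (f : BF n) (a : Fin n → ZMod 2) : ZMod 2 :=
  ∑ x ∈ Finset.univ.filter (fun x : Fin n → ZMod 2 => ∀ i, a i = 0 → x i = 0), f x

def degree {n : ℕ} (f : BF n) : ℕ :=
  (Finset.univ.filter (fun a => anf f a ≠ 0)).sup wt

noncomputable def AI {n : ℕ} (f : BF n) : ℕ :=
  sInf {d | ∃ g : BF n, g ≠ 0 ∧ ((∀ x, g x * f x = 0) ∨ (∀ x, g x * (1 + f x) = 0)) ∧ degree g = d}

lemma zmod2_cases : ∀ c : ZMod 2, c = 0 ∨ c = 1 := by decide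

lemma sum_two (f : ZMod 2 → ℤ) : ∑ b : ZMod 2, f b = f 0 + f 1 := by
  have : (univ : Finset (ZMod 2)) = {0, 1} := rfl
  rw [this, Finset.sum_insert (by decide), Finset.sum_singleton]

lemma inner2 (u v C : ZMod 2) :
    (∑ b1 : ZMod 2, ∑ b2 : ZMod 2, (-1:ℤ)^((C + u*b1 + v*b2).val))
      = if u = 0 ∧ v = 0 then 4 * (-1:ℤ)^(C.val) else 0 := by
  revert u v C; decide

lemma pow_add_one (c : ZMod 2) : ((-1:ℤ))^((c+1).val) = -(-1:ℤ)^(c.val) := by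
  revert c; decide

lemma sum_pi_snoc {k : ℕ} (F : (Fin (k+1) → ZMod 2) → ℤ) :
    ∑ x : Fin (k+1) → ZMod 2, F x
      = ∑ y : Fin k → ZMod 2, ∑ b : ZMod 2, F (Fin.snoc y b) := by
  rw [← (Fin.snocEquiv (fun _ => ZMod 2)).sum_comp F, Fintype.sum_prod_type]
  exact Finset.sum_comm


theorem G_resilient (n m : ℕ) (g h : BF n) (G : BF (n + 3))
    (hg : resilient m g) (hh : resilient m h)
    (hG : ∀ v : Fin (n + 3) → ZMod 2,
      G v = v ⟨n + 2, by omega⟩ + v ⟨n + 1, by omega⟩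
            + (1 + v ⟨n, by omega⟩) * g (fun i : Fin n => v ⟨i.val, by omega⟩)
            + v ⟨n, by omega⟩ * h (fun i : Fin n => v ⟨i.val, by omega⟩)) :
    resilient (m + 2) G := by
  intro a ha
  set a' : Fin n → ZMod 2 := fun i => a ⟨i.val, by omega⟩ with ha'
  set A0 : ZMod 2 := a ⟨n, by omega⟩ with hA0
  set A1 : ZMod 2 := a ⟨n+1, by omega⟩ with hA1
  set A2 : ZMod 2 := a ⟨n+2, by omega⟩ with hA2
  have key : ∀ (y : Fin n → ZMod 2) (b0 b1 b2 : ZMod 2),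
      G (Fin.snoc (Fin.snoc (Fin.snoc y b0) b1) b2)
        + bfInner a (Fin.snoc (Fin.snoc (Fin.snoc y b0) b1) b2)
      = (bfInner a' y + (1 + b0) * g y + b0 * h y + A0 * b0)
          + (1 + A1) * b1 + (1 + A2) * b2 := by
    intro y b0 b1 b2
    set x : Fin (n+3) → ZMod 2 := Fin.snoc (Fin.snoc (Fin.snoc y b0) b1) b2 with hx
    have e2 : x ⟨n+2, by omega⟩ = b2 := by
      show x (Fin.last (n+2)) = b2
      simp [hx]
    have e1 : x ⟨n+1, by omega⟩ = b1 := by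
      show x (Fin.castSucc (Fin.last (n+1))) = b1
      simp [hx]
    have e0 : x ⟨n, by omega⟩ = b0 := by
      show x (Fin.castSucc (Fin.castSucc (Fin.last n))) = b0
      simp [hx]
    have ey : (fun i : Fin n => x ⟨i.val, by omega⟩) = y := by
      funext i
      show x (Fin.castSucc (Fin.castSucc (Fin.castSucc i))) = y i
      simp [hx]
    have einner : bfInner a x = bfInner a' y + A0 * b0 + A1 * b1 + A2 * b2 := by
      show (∑ i : Fin (n+3), a i * x i) = _
      rw [Fin.sum_univ_castSucc, Fin.sum_univ_castSucc, Fin.sum_univ_castSucc]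
      simp only [hx, Fin.snoc_castSucc, Fin.snoc_last]
      rfl
    rw [hG x, e0, e1, e2, ey, einner]
    ring
  have expand : walsh G a
      = ∑ y : Fin n → ZMod 2, ∑ b0 : ZMod 2, ∑ b1 : ZMod 2, ∑ b2 : ZMod 2,
        (-1:ℤ) ^ (((bfInner a' y + (1 + b0) * g y + b0 * h y + A0 * b0)
            + (1 + A1) * b1 + (1 + A2) * b2).val) := by
    show (∑ x : Fin (n+3) → ZMod 2, (-1:ℤ) ^ ((G x + bfInner a x).val)) = _
    rw [sum_pi_snoc, ]
    rw [show (∑ y : Fin (n+2) → ZMod 2, ∑ b : ZMod 2,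
        (-1:ℤ) ^ ((G (Fin.snoc y b) + bfInner a (Fin.snoc y b)).val))
      = ∑ y : Fin (n+2) → ZMod 2, (fun z : Fin (n+2) → ZMod 2 => ∑ b : ZMod 2,
        (-1:ℤ) ^ ((G (Fin.snoc z b) + bfInner a (Fin.snoc z b)).val)) y from rfl]
    rw [sum_pi_snoc]
    rw [show (∑ y : Fin (n+1) → ZMod 2, ∑ b1 : ZMod 2, ∑ b : ZMod 2,
        (-1:ℤ) ^ ((G (Fin.snoc (Fin.snoc y b1) b) + bfInner a (Fin.snoc (Fin.snoc y b1) b)).val))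
      = ∑ y : Fin (n+1) → ZMod 2, (fun z : Fin (n+1) → ZMod 2 => ∑ b1 : ZMod 2, ∑ b : ZMod 2,
        (-1:ℤ) ^ ((G (Fin.snoc (Fin.snoc z b1) b) + bfInner a (Fin.snoc (Fin.snoc z b1) b)).val)) y from rfl]
    rw [sum_pi_snoc]
    simp only [key]
  rw [expand]
  simp only [inner2]
  by_cases hc : (1 + A1 = 0 ∧ 1 + A2 = 0)
  · have hc1 := hc.1
    have hc2 := hc.2
    have h1' : A1 = 1 := by
      rcases zmod2_cases A1 with h | h
      · rw [h] at hc1; exact absurd hc1 (by decide)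
      · exact h
    have h2' : A2 = 1 := by
      rcases zmod2_cases A2 with h | h
      · rw [h] at hc2; exact absurd hc2 (by decide)
      · exact h
    -- weight bound
    have hwt : wt a' ≤ m := by
      have hinj : Function.Injective (fun i : Fin n => (⟨i.val, by omega⟩ : Fin (n+3))) := by
        intro i j hij
        simp only [Fin.mk.injEq] at hij
        exact Fin.ext hij
      have hcard : wt a' + 2 ≤ wt a := by
        unfold wt
        have hsub : ((univ.filter fun i : Fin n => a' i ≠ 0).image
              (fun i : Fin n => (⟨i.val, by omega⟩ : Fin (n+3))))
            ∪ ({⟨n+1, by omega⟩, ⟨n+2, by omega⟩} : Finset (Fin (n+3)))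
            ⊆ univ.filter fun i : Fin (n+3) => a i ≠ 0 := by
          intro j hj
          rw [Finset.mem_union] at hj
          rcases hj with hj | hj
          · rw [Finset.mem_image] at hj
            obtain ⟨i, hi, rfl⟩ := hj
            rw [Finset.mem_filter] at hi ⊢
            exact ⟨Finset.mem_univ _, hi.2⟩
          · rw [Finset.mem_insert, Finset.mem_singleton] at hj
            rw [Finset.mem_filter]
            refine ⟨Finset.mem_univ _, ?_⟩
            rcases hj with rfl | rfl
            · rw [← hA1, h1']; decide
            · rw [← hA2, h2']; decide
        have hdisj : Disjoint ((univ.filter fun i : Fin n => a' i ≠ 0).image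
              (fun i : Fin n => (⟨i.val, by omega⟩ : Fin (n+3))))
            ({⟨n+1, by omega⟩, ⟨n+2, by omega⟩} : Finset (Fin (n+3))) := by
          rw [Finset.disjoint_right]
          intro j hj hj2
          rw [Finset.mem_image] at hj2
          obtain ⟨i, _, rfl⟩ := hj2
          rw [Finset.mem_insert, Finset.mem_singleton] at hj
          rcases hj with hj | hj <;>
            · have := congrArg Fin.val hj
              simp at this
              omega
        have := Finset.card_le_card hsub
        rw [Finset.card_union_of_disjoint hdisj,
          Finset.card_image_of_injective _ hinj] at this
        have hpair : ({⟨n+1, by omega⟩, ⟨n+2, by omega⟩} : Finset (Fin (n+3))).card = 2 := by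
          rw [Finset.card_insert_of_notMem (by
            rw [Finset.mem_singleton]
            intro hh
            have := congrArg Fin.val hh
            simp at this), Finset.card_singleton]
        omega
      omega
    have hg0 : walsh g a' = 0 := hg a' hwt
    have hh0 : walsh h a' = 0 := hh a' hwt
    simp only [if_pos hc]
    have hb0 : ∀ y : Fin n → ZMod 2,
        (∑ b0 : ZMod 2, (4:ℤ) * (-1)^((bfInner a' y + (1+b0)*g y + b0*h y + A0*b0).val))
        = 4 * (-1:ℤ)^((g y + bfInner a' y).val) + 4 * (-1:ℤ)^((h y + bfInner a' y + A0).val) := by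
      intro y
      rw [sum_two]
      have e0 : bfInner a' y + (1+(0:ZMod 2))*g y + (0:ZMod 2)*h y + A0*(0:ZMod 2)
          = g y + bfInner a' y := by ring
      have e1 : bfInner a' y + (1+(1:ZMod 2))*g y + (1:ZMod 2)*h y + A0*(1:ZMod 2)
          = h y + bfInner a' y + A0 := by
        have h11 : (1+(1:ZMod 2)) = 0 := rfl
        rw [h11]; ring
      rw [e0, e1]
    rw [Finset.sum_congr rfl (fun y _ => hb0 y), Finset.sum_add_distrib,
      ← Finset.mul_sum, ← Finset.mul_sum]
    have hsg : (∑ y : Fin n → ZMod 2, (-1:ℤ)^((g y + bfInner a' y).val)) = walsh g a' := rfl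
    have hsh : (∑ y : Fin n → ZMod 2, (-1:ℤ)^((h y + bfInner a' y + A0).val)) = 0 := by
      rcases zmod2_cases A0 with h0 | h0
      · rw [h0]
        simp only [add_zero]
        exact hh0
      · rw [h0]
        simp only [pow_add_one]
        rw [Finset.sum_neg_distrib]
        rw [show (∑ y : Fin n → ZMod 2, (-1:ℤ)^((h y + bfInner a' y).val)) = walsh h a' from rfl,
          hh0, neg_zero]
    rw [hsg, hsh, hg0]
    ring
  · simp only [if_neg hc, Finset.sum_const_zero]
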